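/- Let p ≥ 2, let Σ ∈ ℝ^{p×p} be symmetric positive semidefinite, let S ⊆ {1,…,p} with p ∈ S and s = |S| ≥ 2, and suppose Λ_min(Σ_SS) ≥ C_min > 0 where Σ_SS is the S×S submatrix of Σ. Let D^p denote the p×(p−1) matrix (I_{p−1}, −1_{p−1})ᵀ and set Σ^p = (D^p)ᵀ Σ D^p. Let Σ̂, Σ̃ be random p×p matrices on a probability space such that almost surely Σ̃ is symmetric positive semidefinite with ‖Σ̃ − Σ̂‖_max ≤ ‖K − Σ̂‖_max for every positive semidefinite K, and suppose there exist constants C, c, ζ, ε₀ > 0 such that for every 0 < ε' ≤ ε₀ and all i,j, P(|Σ̂_{ij} − Σ_{ij}| ≥ ε') ≤ C exp(−c n ε'² ζ⁻¹). Then for every ε ≤ min(ε₀, C_min/16), the (S−p)×(S−p) submatrix Σ̃^p_SS of Σ̃^p = (D^p)ᵀ Σ̃ D^p is positive definite with probability at least 1 − C p² exp(−c n (s−1)⁻² ε² ζ⁻¹ / 64). -/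

import Mathlib

/-
On the event that every entry of `Σ̂` is `η`-close to `Σ`, with `η = ε / (8 (s - 1))`, the
max-norm projection `Σ̃` is `2η`-close to `Σ` entrywise, because `Σ` itself is a competitor
in the projection. Then `|vᵀ (Σ̃ - Σ) v| ≤ 2η s ‖v‖²` on `ℝ^S`, so `Σ̃_SS ⪰ (C_min - 2ηs) I ≻ 0`.
The columns of `D^p` indexed by `S − p` vanish outside `S` (as `p ∈ S`) and are linearly
independent, hence `Σ̃^p_{S−p,S−p} = (D^p_{S,S−p})ᵀ Σ̃_SS D^p_{S,S−p}` is positive definite.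
A union bound over the `p²` entries bounds the probability of the complementary event.
-/

open Matrix MeasureTheory
open scoped BigOperators ENNReal

/-- The `p × (p−1)` matrix `D^p = (I_{p−1}, −1_{p−1})ᵀ`. -/
def Dmat (p : ℕ) : Matrix (Fin p) (Fin (p - 1)) ℝ := fun i j =>
  if (i : ℕ) = (j : ℕ) then 1 else if (i : ℕ) = p - 1 then -1 else 0

/-- The entrywise maximum (absolute value) norm of a matrix. -/
noncomputable def maxNorm {m n : Type*} [Fintype m] [Fintype n]
    (M : Matrix m n ℝ) : ℝ :=
  ⨆ i, ⨆ j, |M i j|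

/-- The smallest eigenvalue of a real symmetric matrix, expressed as the infimum of the
Rayleigh quotient `vᵀ M v / ‖v‖₂²` over nonzero vectors `v`. -/
noncomputable def lamMin {m : Type*} [Fintype m] (M : Matrix m m ℝ) : ℝ :=
  ⨅ v : {v : m → ℝ // v ≠ 0}, (v.1 ⬝ᵥ M.mulVec v.1) / ∑ i, (v.1 i) ^ 2

section MaxNorm

variable {m n : Type*} [Fintype m] [Fintype n]

lemma abs_apply_le_maxNorm (M : Matrix m n ℝ) (i : m) (j : n) : |M i j| ≤ maxNorm M :=
  (le_ciSup (Set.finite_range _).bddAbove j).trans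
    (le_ciSup (f := fun i' => ⨆ j', |M i' j'|) (Set.finite_range _).bddAbove i)

lemma maxNorm_le [Nonempty m] [Nonempty n] {M : Matrix m n ℝ} {a : ℝ}
    (h : ∀ i j, |M i j| ≤ a) : maxNorm M ≤ a :=
  ciSup_le fun i => ciSup_le fun j => h i j

/-- A max-norm projection `A` of `X` onto a set containing `K` lies within twice the
entrywise distance of `X` to `K`. -/
lemma abs_sub_apply_le_two_mul_of_maxNorm_sub_le [Nonempty m] [Nonempty n]
    {A X K : Matrix m n ℝ} {η : ℝ} (hA : maxNorm (A - X) ≤ maxNorm (K - X))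
    (hX : ∀ i j, |X i j - K i j| ≤ η) (i : m) (j : n) : |A i j - K i j| ≤ 2 * η := by
  have hKX : maxNorm (K - X) ≤ η := maxNorm_le fun i j => by
    simpa only [Matrix.sub_apply, abs_sub_comm] using hX i j
  have hAX : |A i j - X i j| ≤ η := (abs_apply_le_maxNorm (A - X) i j).trans (hA.trans hKX)
  calc |A i j - K i j| = |(A i j - X i j) + (X i j - K i j)| := by ring_nf
    _ ≤ |A i j - X i j| + |X i j - K i j| := abs_add_le _ _
    _ ≤ 2 * η := by linarith [hX i j]

end MaxNorm

section QuadraticForm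

variable {ι : Type*} [Fintype ι]

lemma sum_sq_pos_of_ne_zero {v : ι → ℝ} (hv : v ≠ 0) : 0 < ∑ i, v i ^ 2 := by
  simpa [dotProduct, sq] using dotProduct_star_self_pos_iff.mpr hv

lemma mul_sum_sq_le_dotProduct_mulVec {A : Matrix ι ι ℝ} (hA : A.PosSemidef) {c : ℝ}
    (hc : c ≤ lamMin A) (v : ι → ℝ) : c * ∑ i, v i ^ 2 ≤ v ⬝ᵥ A *ᵥ v := by
  by_cases hv : v = 0
  · simp [hv]
  have hbdd : BddBelow (Set.range fun w : {w : ι → ℝ // w ≠ 0} =>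
      (w.1 ⬝ᵥ A *ᵥ w.1) / ∑ i, w.1 i ^ 2) := by
    refine ⟨0, ?_⟩
    rintro _ ⟨w, rfl⟩
    exact div_nonneg (by simpa using hA.dotProduct_mulVec_nonneg w.1)
      (Finset.sum_nonneg fun i _ => sq_nonneg _)
  exact (le_div_iff₀ (sum_sq_pos_of_ne_zero hv)).mp (hc.trans (ciInf_le hbdd ⟨v, hv⟩))

lemma abs_dotProduct_mulVec_le {E : Matrix ι ι ℝ} {δ : ℝ} (hE : ∀ i j, |E i j| ≤ δ)
    (v : ι → ℝ) : |v ⬝ᵥ E *ᵥ v| ≤ δ * Fintype.card ι * ∑ i, v i ^ 2 := by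
  rcases isEmpty_or_nonempty ι with hι | ⟨⟨i₀⟩⟩
  · simp
  have hδ : 0 ≤ δ := (abs_nonneg _).trans (hE i₀ i₀)
  calc |v ⬝ᵥ E *ᵥ v| = |∑ i, ∑ j, v i * E i j * v j| := by
        simp only [dotProduct, mulVec, Finset.mul_sum, mul_assoc]
    _ ≤ ∑ i, ∑ j, |v i| * δ * |v j| := by
        refine (Finset.abs_sum_le_sum_abs _ _).trans (Finset.sum_le_sum fun i _ => ?_)
        refine (Finset.abs_sum_le_sum_abs _ _).trans (Finset.sum_le_sum fun j _ => ?_)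
        rw [abs_mul, abs_mul]
        gcongr
        exact hE i j
    _ = δ * (∑ i, |v i|) ^ 2 := by
        rw [sq, Finset.sum_mul_sum, Finset.mul_sum]
        simp only [Finset.mul_sum]
        exact Finset.sum_congr rfl fun i _ => Finset.sum_congr rfl fun j _ => by ring
    _ ≤ δ * (Fintype.card ι * ∑ i, v i ^ 2) := by
        gcongr
        simpa only [sq_abs, Finset.card_univ] using
          sq_sum_le_card_mul_sum_sq (s := Finset.univ) (f := fun i => |v i|)
    _ = δ * Fintype.card ι * ∑ i, v i ^ 2 := by ring

lemma posDef_of_abs_sub_apply_le {A B : Matrix ι ι ℝ} (hA : A.PosSemidef) {c δ : ℝ}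
    (hc : c ≤ lamMin A) (hB : B.IsHermitian) (hBA : ∀ i j, |B i j - A i j| ≤ δ)
    (hδ : δ * Fintype.card ι < c) : B.PosDef := by
  refine PosDef.of_dotProduct_mulVec_pos hB fun v hv => ?_
  have hA_v := mul_sum_sq_le_dotProduct_mulVec hA hc v
  have hE_v := abs_dotProduct_mulVec_le (E := B - A) (fun i j => hBA i j) v
  have hsplit : v ⬝ᵥ B *ᵥ v = v ⬝ᵥ A *ᵥ v + v ⬝ᵥ (B - A) *ᵥ v := by
    rw [sub_mulVec, dotProduct_sub]; ring
  have hgap : 0 < (c - δ * Fintype.card ι) * ∑ i, v i ^ 2 :=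
    mul_pos (by linarith) (sum_sq_pos_of_ne_zero hv)
  rw [star_trivial, hsplit]
  nlinarith [neg_abs_le (v ⬝ᵥ (B - A) *ᵥ v)]

end QuadraticForm

lemma Matrix.submatrix_transpose_mul_mul_of_support {m n k R : Type*} [Fintype m]
    [NonUnitalNonAssocSemiring R] (D : Matrix m n R) (M : Matrix m m R) (s : Finset m)
    (e : k → n) (hD : ∀ i ∉ s, ∀ a, D i (e a) = 0) :
    (Dᵀ * M * D).submatrix e e =
      (D.submatrix (fun i : s => (i : m)) e)ᵀ *
        M.submatrix (fun i : s => (i : m)) (fun i : s => (i : m)) *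
        D.submatrix (fun i : s => (i : m)) e := by
  have restrict (f : m → R) (hf : ∀ i ∉ s, f i = 0) : ∑ i, f i = ∑ i : s, f i := by
    rw [Finset.sum_coe_sort]
    exact (Finset.sum_subset (Finset.subset_univ s) fun i _ hi => hf i hi).symm
  ext a b
  simp only [submatrix_apply, mul_apply, transpose_apply]
  rw [restrict _ fun l hl => by rw [hD l hl, mul_zero]]
  refine Finset.sum_congr rfl fun l _ => ?_
  rw [restrict _ fun i hi => by rw [hD i hi, zero_mul]]

/-- The index set `S − p`, as columns of `D^p`. -/
abbrev dropLast {p : ℕ} (S : Finset (Fin p)) : Type :=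
  {j : Fin (p - 1) // Fin.castLE (Nat.sub_le p 1) j ∈ S}

lemma Dmat_castLE_apply {p : ℕ} (j k : Fin (p - 1)) :
    Dmat p (Fin.castLE (Nat.sub_le p 1) j) k = if j = k then 1 else 0 := by
  have hj : (j : ℕ) ≠ p - 1 := j.isLt.ne
  simp [Dmat, Fin.ext_iff, hj]

lemma Dmat_apply_eq_zero {p : ℕ} {i : Fin p} {k : Fin (p - 1)}
    (hik : i ≠ Fin.castLE (Nat.sub_le p 1) k) (hi : (i : ℕ) ≠ p - 1) : Dmat p i k = 0 := by
  simp_all [Dmat, Fin.ext_iff]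

section Logratio

variable {p : ℕ} {S : Finset (Fin p)}

abbrev DmatSub (S : Finset (Fin p)) : Matrix S (dropLast S) ℝ :=
  (Dmat p).submatrix (↑) Subtype.val

lemma DmatSub_mulVec_apply (u : dropLast S → ℝ) (j : dropLast S) :
    (DmatSub S *ᵥ u) ⟨_, j.2⟩ = u j := by
  simp [mulVec, dotProduct, Dmat_castLE_apply, Subtype.coe_inj]

lemma DmatSub_mulVec_injective : Function.Injective (DmatSub S).mulVec := fun u u' h => by
  ext j
  rw [← DmatSub_mulVec_apply u j, ← DmatSub_mulVec_apply u' j, h]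

/-- The columns of `D^p` indexed by `S − p` vanish outside `S`, so
`Σ^p_{S−p,S−p} = (D^p_{S,S−p})ᵀ Σ_SS D^p_{S,S−p}`. -/
lemma posDef_Dmat_transpose_mul_mul_submatrix (hp : 0 < p)
    (hpS : (⟨p - 1, by omega⟩ : Fin p) ∈ S)
    {M : Matrix (Fin p) (Fin p) ℝ} (hM : (M.submatrix ((↑) : S → Fin p) (↑)).PosDef) :
    (((Dmat p)ᵀ * M * Dmat p).submatrix (Subtype.val : dropLast S → _) Subtype.val).PosDef := by
  have hsupp (i : Fin p) (hi : i ∉ S) (j : dropLast S) : Dmat p i j = 0 :=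
    Dmat_apply_eq_zero (fun h => hi (h ▸ j.2))
      (fun h => hi ((Fin.ext h : i = ⟨p - 1, by omega⟩) ▸ hpS))
  rw [submatrix_transpose_mul_mul_of_support _ _ S _ hsupp]
  simpa only [conjTranspose_eq_transpose_of_trivial] using
    hM.conjTranspose_mul_mul_same DmatSub_mulVec_injective

end Logratio

section Probability

variable {Ω : Type*} [MeasurableSpace Ω] {μ : Measure Ω}

lemma measure_iUnion_le_ofReal_card_mul {ι : Type*} [Fintype ι] {A : ι → Set Ω} {a : ℝ}
    (h : ∀ i, μ (A i) ≤ ENNReal.ofReal a) :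
    μ (⋃ i, A i) ≤ ENNReal.ofReal (Fintype.card ι * a) :=
  calc μ (⋃ i, A i) ≤ ∑ i, μ (A i) := measure_iUnion_fintype_le μ A
    _ ≤ ∑ _i : ι, ENNReal.ofReal a := Finset.sum_le_sum fun i _ => h i
    _ = ENNReal.ofReal (Fintype.card ι * a) := by
      rw [Finset.sum_const, Finset.card_univ, nsmul_eq_mul, ENNReal.ofReal_mul (by positivity),
        ENNReal.ofReal_natCast]

lemma ofReal_one_sub_le_measure [IsProbabilityMeasure μ] {B T : Set Ω} {r : ℝ} (hr : 0 ≤ r)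
    (hB : μ B ≤ ENNReal.ofReal r) (hT : ∀ᵐ ω ∂μ, ω ∉ B → ω ∈ T) :
    ENNReal.ofReal (1 - r) ≤ μ T := by
  have hcover : 1 ≤ μ B + μ Bᶜ := by
    rw [← measure_univ (μ := μ), ← Set.union_compl_self B]
    exact measure_union_le B Bᶜ
  calc ENNReal.ofReal (1 - r) = 1 - ENNReal.ofReal r := by
        rw [ENNReal.ofReal_sub _ hr, ENNReal.ofReal_one]
    _ ≤ 1 - μ B := tsub_le_tsub_left hB 1
    _ ≤ μ Bᶜ := tsub_le_iff_left.mpr hcover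
    _ ≤ μ T := measure_mono_ae hT

end Probability

/-- Positive definiteness of `Σ̃^p_SS` with high probability: under the eigenvalue condition
`Λ_min(Σ_SS) ≥ C_min > 0` and the entrywise closeness (concentration) condition on `Σ̂`, for
every `ε ≤ min(ε₀, C_min/16)` the `(S−p) × (S−p)` submatrix of `Σ̃^p = (D^p)ᵀ Σ̃ D^p` is
positive definite with probability at least
`1 − C p² exp(−c n (s−1)⁻² ε² ζ⁻¹ / 64)`. -/
theorem logratio_submatrix_posDef_whp
    {Ω : Type*} [MeasurableSpace Ω] (μ : Measure Ω) [IsProbabilityMeasure μ]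
    (n p : ℕ) (hp : 2 ≤ p)
    (Sig : Matrix (Fin p) (Fin p) ℝ) (hSig : Sig.PosSemidef)
    (S : Finset (Fin p)) (hpS : (⟨p - 1, by omega⟩ : Fin p) ∈ S) (hs : 2 ≤ S.card)
    (Cmin : ℝ)
    (hmin : Cmin ≤ lamMin (Sig.submatrix (fun i : S => (i : Fin p)) (fun j : S => (j : Fin p))))
    (Sighat Sigtil : Ω → Matrix (Fin p) (Fin p) ℝ)
    (hAS : ∀ᵐ ω ∂μ, (Sigtil ω).PosSemidef ∧
      ∀ K : Matrix (Fin p) (Fin p) ℝ, K.PosSemidef →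
        maxNorm (Sigtil ω - Sighat ω) ≤ maxNorm (K - Sighat ω))
    (C c ζ ε₀ : ℝ) (hC : 0 < C)
    (hclose : ∀ ε' : ℝ, 0 < ε' → ε' ≤ ε₀ → ∀ i j : Fin p,
      μ {ω | ε' ≤ |Sighat ω i j - Sig i j|}
        ≤ ENNReal.ofReal (C * Real.exp (-(c * n * ε' ^ 2) / ζ))) :
    ∀ ε : ℝ, 0 < ε → ε ≤ min ε₀ (Cmin / 16) →
      ENNReal.ofReal
          (1 - C * p ^ 2 *
            Real.exp (-(c * n * ε ^ 2) / (64 * ((S.card : ℝ) - 1) ^ 2 * ζ)))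
        ≤ μ {ω |
            (((Dmat p)ᵀ * Sigtil ω * Dmat p).submatrix
              (fun j : {j : Fin (p - 1) // Fin.castLE (Nat.sub_le p 1) j ∈ S} => j.1)
              (fun j : {j : Fin (p - 1) // Fin.castLE (Nat.sub_le p 1) j ∈ S} => j.1)).PosDef} := by
  intro ε hε hεle
  set s₁ : ℝ := (S.card : ℝ) - 1
  have hs₁ : 1 ≤ s₁ := by
    have : (2 : ℝ) ≤ S.card := by exact_mod_cast hs
    linarith
  -- the entrywise accuracy of `Σ̂` under which `Σ̃_SS` stays positive definite
  set η := ε / (8 * s₁) with hη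
  have hη_pos : 0 < η := by positivity
  have hη_le : η ≤ min ε₀ (Cmin / 16) := (div_le_self hε.le (by linarith)).trans hεle
  have hsmall : 2 * η * S.card < Cmin :=
    calc 2 * η * S.card ≤ 2 * η * (2 * s₁) := by gcongr; linarith
      _ = ε / 2 := by rw [hη]; field_simp; ring
      _ < Cmin := by linarith [le_min_iff.mp hεle]
  have hbad : μ (⋃ ij : Fin p × Fin p, {ω | η ≤ |Sighat ω ij.1 ij.2 - Sig ij.1 ij.2|}) ≤
      ENNReal.ofReal (C * p ^ 2 * Real.exp (-(c * n * ε ^ 2) / (64 * s₁ ^ 2 * ζ))) := by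
    convert measure_iUnion_le_ofReal_card_mul
      fun ij : Fin p × Fin p => hclose η hη_pos (hη_le.trans (min_le_left _ _)) ij.1 ij.2 using 2
    rw [Fintype.card_prod, Fintype.card_fin, hη]
    push_cast
    ring_nf
  refine ofReal_one_sub_le_measure (by positivity) hbad ?_
  filter_upwards [hAS] with ω ⟨hpsd, hproj⟩ hω
  have hhat : ∀ i j, |Sighat ω i j - Sig i j| ≤ η := fun i j => by
    simp only [Set.mem_iUnion, Set.mem_ofPred_eq, not_exists, not_le] at hω
    exact (hω (i, j)).le
  have : Nonempty (Fin p) := ⟨⟨0, by omega⟩⟩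
  refine posDef_Dmat_transpose_mul_mul_submatrix (by omega) hpS ?_
  refine posDef_of_abs_sub_apply_le (hSig.submatrix _) hmin (hpsd.1.submatrix _)
    (fun i j => abs_sub_apply_le_two_mul_of_maxNorm_sub_le (hproj Sig hSig) hhat i j) ?_
  simpa only [Fintype.card_coe] using hsmall
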